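/- Law of large numbers for types: if t⃗ is a sequence of m i.i.d. samples from a probability mass function P on finite alphabet X and P_{t⃗} is its empirical type, then for any β > 0, Pr(D(P_{t⃗}‖P) > β) ≤ 2^{-m(β - |X|·log₂(m+1)/m)}. -/

import Mathlib

/-! If `t` has type `Q` and no letter of `t` has `P`-probability zero, then
`∏ₖ P (t k) = 2 ^ (-m D(Q‖P)) ∏ₖ Q (t k)`, since both products only depend on the letter counts
`m Q a`. So on the event `D(Q‖P) > β` the probability of `t` is at most `2 ^ (-m β)` times its
probability under its own type. A type class has probability at most one under its type, and
there are at most `(m + 1) ^ |X|` types. -/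

open Finset
open scoped Classical

/-- Empirical type of a sequence. -/
noncomputable def typeOf {α : Type*} [Fintype α] [DecidableEq α] {m : ℕ} (xv : Fin m → α) :
    α → ℝ :=
  fun a => ((Finset.univ.filter fun i => xv i = a).card : ℝ) / m

/-- Base-2 KL divergence. -/
noncomputable def KL {α : Type*} [Fintype α] (P Q : α → ℝ) : ℝ :=
  ∑ x, P x * Real.logb 2 (P x / Q x)

section EmpiricalType

variable {α : Type*} [Fintype α] [DecidableEq α] {m : ℕ}

lemma typeOf_nonneg (t : Fin m → α) (a : α) : 0 ≤ typeOf t a := by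
  unfold typeOf; positivity

lemma typeOf_apply_pos (hm : 0 < m) (t : Fin m → α) (k : Fin m) : 0 < typeOf t (t k) := by
  unfold typeOf
  have : 0 < (univ.filter fun i => t i = t k).card := card_pos.2 ⟨k, by simp⟩
  positivity

lemma sum_comp_eq_mul_sum_typeOf (hm : 0 < m) (t : Fin m → α) (f : α → ℝ) :
    ∑ k, f (t k) = m * ∑ a, typeOf t a * f a := by
  have hm' : (m : ℝ) ≠ 0 := by positivity
  rw [sum_comp, sum_subset (subset_univ _) fun a _ ha => by simp_all, mul_sum]
  refine sum_congr rfl fun a _ => ?_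
  rw [← mul_assoc, typeOf, mul_div_cancel₀ _ hm', nsmul_eq_mul]

lemma sum_typeOf (hm : 0 < m) (t : Fin m → α) : ∑ a, typeOf t a = 1 := by
  have hm' : (m : ℝ) ≠ 0 := by positivity
  have := sum_comp_eq_mul_sum_typeOf hm t fun _ => 1
  simp only [sum_const, card_univ, Fintype.card_fin, nsmul_eq_mul, mul_one] at this
  exact (mul_eq_left₀ hm').1 this.symm

lemma sum_logb_div_typeOf (hm : 0 < m) (P : α → ℝ) (t : Fin m → α) :
    ∑ k, Real.logb 2 (P (t k) / typeOf t (t k)) = -(m * KL (typeOf t) P) := by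
  rw [sum_comp_eq_mul_sum_typeOf hm t fun a => Real.logb 2 (P a / typeOf t a), KL, ← mul_neg,
    ← sum_neg_distrib]
  refine congrArg _ (sum_congr rfl fun a _ => ?_)
  rw [← inv_div, Real.logb_inv, mul_neg]

lemma prod_eq_two_rpow_neg_mul_KL_mul_prod_typeOf (hm : 0 < m) (P : α → ℝ) (t : Fin m → α)
    (hP : ∀ k, 0 < P (t k)) :
    ∏ k, P (t k) = 2 ^ (-(m * KL (typeOf t) P)) * ∏ k, typeOf t (t k) := by
  have hQ := typeOf_apply_pos hm t
  rw [← sum_logb_div_typeOf hm, Real.rpow_sum_of_pos two_pos, ← prod_mul_distrib]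
  refine prod_congr rfl fun k _ => ?_
  rw [Real.rpow_logb two_pos (by norm_num) (div_pos (hP k) (hQ k)), div_mul_cancel₀ _ (hQ k).ne']

lemma prod_le_two_rpow_neg_mul_mul_prod_typeOf (hm : 0 < m) (P : α → ℝ) (hP0 : ∀ x, 0 ≤ P x)
    {β : ℝ} (t : Fin m → α) (hβ : β < KL (typeOf t) P) :
    ∏ k, P (t k) ≤ 2 ^ (-(m * β)) * ∏ k, typeOf t (t k) := by
  have hQ : 0 ≤ ∏ k, typeOf t (t k) := prod_nonneg fun k _ => typeOf_nonneg t (t k)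
  by_cases hP : ∀ k, 0 < P (t k)
  · rw [prod_eq_two_rpow_neg_mul_KL_mul_prod_typeOf hm P t hP]
    gcongr
    norm_num
  · obtain ⟨k, hk⟩ := not_forall.1 hP
    rw [prod_eq_zero (mem_univ k) (le_antisymm (not_lt.1 hk) (hP0 _))]
    positivity

lemma card_image_typeOf_le :
    (univ.image (typeOf : (Fin m → α) → α → ℝ)).card ≤ (m + 1) ^ Fintype.card α := by
  let count : (Fin m → α) → α → Fin (m + 1) := fun t a =>
    ⟨(univ.filter fun i => t i = a).card, Nat.lt_succ_of_le ((card_filter_le _ _).trans (by simp))⟩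
  have himage : univ.image typeOf ⊆ univ.image fun (c : α → Fin (m + 1)) a => (c a : ℝ) / m :=
    fun Q hQ => by
      obtain ⟨t, -, rfl⟩ := mem_image.1 hQ
      exact mem_image.2 ⟨count t, mem_univ _, rfl⟩
  calc _ ≤ _ := card_le_card himage
    _ ≤ (univ : Finset (α → Fin (m + 1))).card := card_image_le
    _ = (m + 1) ^ Fintype.card α := by simp

lemma sum_prod_typeOf_fiber_le_one (hm : 0 < m) (Q : α → ℝ) :
    ∑ t ∈ univ.filter fun t : Fin m → α => typeOf t = Q, ∏ k, typeOf t (t k) ≤ 1 := by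
  rcases (univ.filter fun t : Fin m → α => typeOf t = Q).eq_empty_or_nonempty with h | ⟨s, hs⟩
  · simp [h]
  have hsQ : typeOf s = Q := (mem_filter.1 hs).2
  calc ∑ t ∈ univ.filter fun t : Fin m → α => typeOf t = Q, ∏ k, typeOf t (t k)
      = ∑ t ∈ univ.filter fun t : Fin m → α => typeOf t = Q, ∏ k, Q (t k) :=
        sum_congr rfl fun t ht => by rw [(mem_filter.1 ht).2]
    _ ≤ ∑ t : Fin m → α, ∏ k, Q (t k) :=
        sum_le_sum_of_subset_of_nonneg (filter_subset _ _) fun t _ _ =>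
          prod_nonneg fun k _ => hsQ ▸ typeOf_nonneg s (t k)
    _ = 1 := by rw [← Fintype.sum_pow, ← hsQ, sum_typeOf hm, one_pow]

lemma sum_prod_typeOf_le (hm : 0 < m) :
    ∑ t : Fin m → α, ∏ k, typeOf t (t k) ≤ ((m : ℝ) + 1) ^ Fintype.card α := by
  rw [← sum_fiberwise_of_maps_to (t := univ.image typeOf)
    fun t _ => mem_image_of_mem _ (mem_univ t)]
  calc _ ≤ ∑ _Q ∈ univ.image (typeOf : (Fin m → α) → α → ℝ), (1 : ℝ) :=
        sum_le_sum fun Q _ => sum_prod_typeOf_fiber_le_one hm Q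
    _ ≤ ((m : ℝ) + 1) ^ Fintype.card α := by
        rw [sum_const, nsmul_one]
        exact_mod_cast card_image_typeOf_le

end EmpiricalType

lemma two_rpow_neg_mul_sub_eq {m : ℝ} (hm : 0 < m) (β : ℝ) (n : ℕ) :
    (2 : ℝ) ^ (-m * (β - n * Real.logb 2 (m + 1) / m)) = 2 ^ (-(m * β)) * (m + 1) ^ n := by
  have hexp : -m * (β - n * Real.logb 2 (m + 1) / m) = -(m * β) + Real.logb 2 (m + 1) * n := by
    field_simp
    ring
  rw [hexp, Real.rpow_add two_pos, Real.rpow_mul zero_le_two,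
    Real.rpow_logb two_pos (by norm_num) (by positivity), Real.rpow_natCast]

theorem stmt18_general {α : Type*} [Fintype α] [DecidableEq α] {m : ℕ} (hm : 0 < m)
    (P : α → ℝ) (hP0 : ∀ x, 0 ≤ P x)
    (β : ℝ) :
    (∑ t : Fin m → α, if β < KL (typeOf t) P then ∏ k, P (t k) else 0) ≤
      (2:ℝ) ^ (-(m:ℝ) * (β - (Fintype.card α : ℝ) * Real.logb 2 (m + 1) / m)) := by
  calc (∑ t : Fin m → α, if β < KL (typeOf t) P then ∏ k, P (t k) else 0)
      ≤ ∑ t : Fin m → α, 2 ^ (-(m * β)) * ∏ k, typeOf t (t k) := by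
        refine sum_le_sum fun t _ => ?_
        split_ifs with h
        · exact prod_le_two_rpow_neg_mul_mul_prod_typeOf hm P hP0 t h
        · exact mul_nonneg (by positivity) (prod_nonneg fun k _ => typeOf_nonneg t (t k))
    _ = 2 ^ (-(m * β)) * ∑ t : Fin m → α, ∏ k, typeOf t (t k) := (mul_sum _ _ _).symm
    _ ≤ 2 ^ (-(m * β)) * ((m : ℝ) + 1) ^ Fintype.card α := by
        gcongr
        exact sum_prod_typeOf_le hm
    _ = _ := (two_rpow_neg_mul_sub_eq (by positivity) β _).symm

theorem stmt18 {α : Type*} [Fintype α] [DecidableEq α] {m : ℕ} (hm : 0 < m)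
    (P : α → ℝ) (hP0 : ∀ x, 0 ≤ P x) (hP1 : ∑ x, P x = 1)
    (β : ℝ) (hβ : 0 < β) :
    (∑ t : Fin m → α, if β < KL (typeOf t) P then ∏ k, P (t k) else 0) ≤
      (2:ℝ) ^ (-(m:ℝ) * (β - (Fintype.card α : ℝ) * Real.logb 2 (m + 1) / m)) :=
  stmt18_general hm P hP0 β
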